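/- Let ψ : ℝ² → ℝ be convex with ψ(0) = 0 and linear growth, and let ψ̄ be its recession function. Suppose there is C > 0 and a dense set S of rays in ℝ² such that along each ray τ ∈ S one has |ψ − ψ̄| ≤ C outside a compact subset of τ. Then |ψ − ψ̄| ≤ C everywhere on ℝ². -/

import Mathlib

open Filter Topology

/-- Auxiliary: positive homogeneity of the recession function. -/
lemma aux_homog (ψ ψbar : ℝ × ℝ → ℝ)
    (hrec : ∀ v : ℝ × ℝ,
      Filter.Tendsto (fun t : ℝ => ψ (t • v) / t) Filter.atTop (nhds (ψbar v)))
    (v : ℝ × ℝ) {s : ℝ} (hs : 0 < s) : ψbar (s • v) = s * ψbar v := by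
  have hmap : Tendsto (fun t : ℝ => t * s) atTop atTop :=
    Tendsto.atTop_mul_const hs tendsto_id
  have h1 : Tendsto (fun t : ℝ => ψ ((t * s) • v) / (t * s)) atTop (nhds (ψbar v)) :=
    (hrec v).comp hmap
  have h2 : Tendsto (fun t : ℝ => s * (ψ ((t * s) • v) / (t * s))) atTop
      (nhds (s * ψbar v)) := h1.const_mul s
  have h3 : Tendsto (fun t : ℝ => ψ (t • s • v) / t) atTop (nhds (s * ψbar v)) := by
    refine h2.congr' ?_
    filter_upwards [eventually_gt_atTop 0] with t ht
    have ht0 : t ≠ 0 := ne_of_gt ht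
    have : (t * s) • v = t • s • v := by rw [mul_smul]
    rw [this]
    field_simp
  exact tendsto_nhds_unique (hrec (s • v)) h3

/-- Auxiliary: the secant slope of ψ along a ray is at most the recession slope,
hence `t ↦ ψ (t • v) - t * ψbar v` is nonincreasing. -/
lemma aux_antitone (ψ ψbar : ℝ × ℝ → ℝ) (hconv : ConvexOn ℝ Set.univ ψ)
    (hrec : ∀ v : ℝ × ℝ,
      Filter.Tendsto (fun t : ℝ => ψ (t • v) / t) Filter.atTop (nhds (ψbar v)))
    (v : ℝ × ℝ) {a b : ℝ} (hab : a ≤ b) :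
    ψ (b • v) - b * ψbar v ≤ ψ (a • v) - a * ψbar v := by
  rcases eq_or_lt_of_le hab with rfl | hab
  · exact le_rfl
  · -- f : ℝ → ℝ, f t = ψ (t • v) is convex
    set f : ℝ → ℝ := fun t => ψ (t • v) with hf
    have hfconv : ConvexOn ℝ Set.univ f := by
      have := hconv.comp_affineMap ((LinearMap.toSpanSingleton ℝ (ℝ × ℝ) v).toAffineMap)
      simpa [hf, Function.comp_def, LinearMap.toSpanSingleton_apply] using this
    -- the slope from a to t tends to ψbar v
    have hslope : Tendsto (fun t : ℝ => (f t - f a) / (t - a)) atTop (nhds (ψbar v)) := by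
      have h1 : Tendsto (fun t : ℝ => (ψ (t • v) / t - f a / t) / (1 - a / t)) atTop
          (nhds ((ψbar v - 0) / (1 - 0))) := by
        refine Tendsto.div ((hrec v).sub ?_) (tendsto_const_nhds.sub ?_) (by norm_num)
        · exact tendsto_const_nhds.div_atTop tendsto_id
        · exact tendsto_const_nhds.div_atTop tendsto_id
      simp only [sub_zero, div_one] at h1
      refine h1.congr' ?_
      filter_upwards [eventually_gt_atTop (max a 0)] with t ht
      have ht0 : t ≠ 0 := ne_of_gt (lt_of_le_of_lt (le_max_right a 0) ht)
      have hta : t - a ≠ 0 := sub_ne_zero.2 (ne_of_gt (lt_of_le_of_lt (le_max_left a 0) ht))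
      field_simp
      rfl
    -- slope from a to b ≤ slope from a to t for t large
    have hkey : (f b - f a) / (b - a) ≤ ψbar v := by
      refine ge_of_tendsto hslope ?_
      filter_upwards [eventually_gt_atTop b] with t ht
      exact hfconv.secant_mono (Set.mem_univ a) (Set.mem_univ b) (Set.mem_univ t)
        (ne_of_gt hab) (ne_of_gt (hab.trans ht)) ht.le
    have hba : 0 < b - a := sub_pos.2 hab
    have := (div_le_iff₀ hba).1 hkey
    have hfa : f a = ψ (a • v) := rfl
    have hfb : f b = ψ (b • v) := rfl
    nlinarith [this]

/-- Let `ψ : ℝ² → ℝ` be convex with `ψ(0) = 0` and linear growth, and let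
`ψ̄` be its recession function. If `|ψ − ψ̄| ≤ C` holds at infinity along each ray of a
dense set of rays (directions `D`, whose union of open rays is dense in ℝ²), then
`|ψ − ψ̄| ≤ C` everywhere on ℝ². -/
theorem stmt10 (ψ ψbar : ℝ × ℝ → ℝ) (hconv : ConvexOn ℝ Set.univ ψ) (hzero : ψ 0 = 0)
    (hgrowth : ∃ B : ℝ, ∀ v : ℝ × ℝ, |ψ v| ≤ B * (‖v‖ + 1))
    (hrec : ∀ v : ℝ × ℝ,
      Filter.Tendsto (fun t : ℝ => ψ (t • v) / t) Filter.atTop (nhds (ψbar v)))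
    (C : ℝ) (hC : 0 < C)
    (D : Set (ℝ × ℝ)) (hD0 : ∀ v ∈ D, v ≠ 0)
    (hdense : Dense (⋃ v ∈ D, {x : ℝ × ℝ | ∃ t : ℝ, 0 < t ∧ x = t • v}))
    (hbnd : ∀ v ∈ D, ∃ T : ℝ, ∀ t : ℝ, T ≤ t → |ψ (t • v) - ψbar (t • v)| ≤ C) :
    ∀ x : ℝ × ℝ, |ψ x - ψbar x| ≤ C := by
  -- ψbar is convex
  have hbarconv : ConvexOn ℝ Set.univ ψbar := by
    refine ⟨convex_univ, fun x _ y _ a b ha hb hab => ?_⟩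
    have h1 : Tendsto (fun t : ℝ => ψ (t • (a • x + b • y)) / t) atTop
        (nhds (ψbar (a • x + b • y))) := hrec _
    have h2 : Tendsto (fun t : ℝ => a * (ψ (t • x) / t) + b * (ψ (t • y) / t)) atTop
        (nhds (a * ψbar x + b * ψbar y)) := ((hrec x).const_mul a).add ((hrec y).const_mul b)
    refine le_of_tendsto_of_tendsto h1 h2 ?_
    filter_upwards [eventually_gt_atTop 0] with t ht
    have hcv : ψ (a • (t • x) + b • (t • y)) ≤ a * ψ (t • x) + b * ψ (t • y) :=
      hconv.2 (Set.mem_univ _) (Set.mem_univ _) ha hb hab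
    have heq : t • (a • x + b • y) = a • (t • x) + b • (t • y) := by
      simp [smul_smul, smul_add, mul_comm]
    rw [heq]
    rw [div_le_iff₀ ht]
    have ht0 : t ≠ 0 := ne_of_gt ht
    calc ψ (a • (t • x) + b • (t • y)) ≤ a * ψ (t • x) + b * ψ (t • y) := hcv
      _ = (a * (ψ (t • x) / t) + b * (ψ (t • y) / t)) * t := by field_simp
  -- continuity
  have hcontψ : Continuous ψ := by
    rw [← continuousOn_univ]
    exact hconv.continuousOn isOpen_univ
  have hcontbar : Continuous ψbar := by
    rw [← continuousOn_univ]
    exact hbarconv.continuousOn isOpen_univ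
  -- the bound holds on the dense union of rays
  have hS : (⋃ v ∈ D, {x : ℝ × ℝ | ∃ t : ℝ, 0 < t ∧ x = t • v}) ⊆
      {x : ℝ × ℝ | |ψ x - ψbar x| ≤ C} := by
    rintro x hx
    simp only [Set.mem_iUnion, Set.mem_setOf_eq] at hx
    obtain ⟨v, hv, t, ht, rfl⟩ := hx
    have hhom := aux_homog ψ ψbar hrec v ht
    obtain ⟨T, hT⟩ := hbnd v hv
    set u : ℝ := max T (max t 1) with hu
    have hTu : T ≤ u := le_max_left _ _
    have htu : t ≤ u := le_trans (le_max_left t 1) (le_max_right _ _)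
    have hu0 : (0:ℝ) < u := lt_of_lt_of_le one_pos (le_trans (le_max_right t 1) (le_max_right _ _))
    have hub := hT u hTu
    show |ψ (t • v) - ψbar (t • v)| ≤ C
    rw [aux_homog ψ ψbar hrec v hu0] at hub
    rw [hhom]
    rw [abs_le] at hub ⊢
    constructor
    · -- lower bound: nonincreasing, value at u is ≥ -C
      have := aux_antitone ψ ψbar hconv hrec v htu
      linarith [hub.1]
    · -- upper bound: value at 0 is 0
      have := aux_antitone ψ ψbar hconv hrec v ht.le
      have h0 : ψ ((0:ℝ) • v) - 0 * ψbar v = 0 := by simp [hzero]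
      linarith
  -- conclude by density
  intro x
  have hclosed : IsClosed {x : ℝ × ℝ | |ψ x - ψbar x| ≤ C} :=
    isClosed_le (by continuity) continuous_const
  have : x ∈ closure (⋃ v ∈ D, {x : ℝ × ℝ | ∃ t : ℝ, 0 < t ∧ x = t • v}) := hdense x
  exact hclosed.closure_subset_iff.2 hS this
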